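/- arXiv:1707.04551 — 7 statements merged into one kernel-verified Lean document; each statement's English description precedes it below -/
import Mathlib

section
/- Let Γ be a finitely generated abelian group, 𝒜 a finite list of elements of Γ, and G an abelian group. For α ∈ 𝒜, let 𝒜' = 𝒜 \ {α} (deletion) and identify Hom(Γ/⟨α⟩, G) with the subgroup {φ ∈ Hom(Γ,G) : φ(α) = 0} of Hom(Γ, G). Then the complement M(𝒜'; Γ, G) decomposes as the disjoint union of M(𝒜; Γ, G) and M(𝒜''; Γ/⟨α⟩, G), where 𝒜'' is the image of 𝒜' in Γ/⟨α⟩. -/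
/-- Set-theoretic deletion-contraction: `M(𝒜'; Γ, G) = M(𝒜; Γ, G) ⊔ M(𝒜''; Γ/⟨α⟩, G)`,
where `M(𝒜''; Γ/⟨α⟩, G)` is identified with `{φ : Γ →+ G | φ α = 0 ∧ ∀ β ∈ 𝒜', φ β ≠ 0}`. -/
theorem set_deletion_contraction (Γ G : Type*) [DecidableEq Γ] [AddCommGroup Γ] [AddGroup.FG Γ]
    [AddCommGroup G] (A : Multiset Γ) (α : Γ) (hα : α ∈ A) :
    ({φ : Γ →+ G | ∀ β ∈ A.erase α, φ β ≠ 0} =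
      {φ : Γ →+ G | ∀ β ∈ A, φ β ≠ 0} ∪
        {φ : Γ →+ G | φ α = 0 ∧ ∀ β ∈ A.erase α, φ β ≠ 0}) ∧
    Disjoint {φ : Γ →+ G | ∀ β ∈ A, φ β ≠ 0}
      {φ : Γ →+ G | φ α = 0 ∧ ∀ β ∈ A.erase α, φ β ≠ 0} := by
  constructor
  · ext φ
    simp only [Set.mem_setOf_eq, Set.mem_union]
    constructor
    · intro h
      by_cases hφα : φ α = 0
      · exact Or.inr ⟨hφα, h⟩
      · left
        intro β hβ
        rcases eq_or_ne β α with rfl | hne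
        · exact hφα
        · exact h β ((Multiset.mem_erase_of_ne hne).mpr hβ)
    · rintro (h | ⟨_, h⟩) <;> exact fun β hβ => h β (by first | exact Multiset.mem_of_mem_erase hβ | exact hβ)
  · rw [Set.disjoint_left]
    rintro φ h ⟨h0, _⟩
    exact h α hα h0
end

section
/- Let Γ be a finitely generated abelian group, 𝒜 a finite list of elements in Γ, and G a finite abelian group. Then the cardinality of the complement M(𝒜; Γ, G) = Hom(Γ, G) \ ⋃_{α∈𝒜} H_{α,G} equals χ_𝒜^G(#G) = Σ_{𝒮⊂𝒜} (−1)^{#𝒮} · m(𝒮; G) · (#G)^{r_Γ − r_𝒮}, where the sum is over all sublists 𝒮 of 𝒜. -/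
/-- The rank of the subgroup generated by a subset `X` of an abelian group `Γ`. -/
noncomputable def rk (Γ : Type*) [AddCommGroup Γ] (X : Set Γ) : ℕ :=
  Module.finrank ℤ (AddSubgroup.closure X)

/-- The `G`-multiplicity `m(X; G) = #Hom((Γ/⟨X⟩)_tor, G)`. -/
noncomputable def mult (Γ : Type*) [AddCommGroup Γ] (G : Type*) [AddCommGroup G]
    (X : Set Γ) : ℕ :=
  Nat.card ((AddCommGroup.torsion (Γ ⧸ AddSubgroup.closure X)) →+ G)

/-!
By inclusion–exclusion over the kernels `H_{α,G}`, it suffices to count the homomorphisms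
vanishing on a sublist `𝒮`, i.e. `Hom(Γ/⟨𝒮⟩, G)`. By the structure theorem a finitely generated
abelian group `Q` is `ℤ^r × T` with `T ≅ Q_tor` finite and `r = rank Q`, so
`#Hom(Q, G) = #Hom(Q_tor, G) · #G^r`; and `rank(Γ/⟨𝒮⟩) = r_Γ - r_𝒮` by rank–nullity.
-/

open Module Finset

universe u

namespace AddMonoidHom

instance finite_of_fg {M G : Type*} [AddGroup M] [AddGroup.FG M] [AddMonoid G] [Finite G] :
    Finite (M →+ G) := by
  obtain ⟨s, hs⟩ := AddGroup.FG.out (H := M)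
  exact Finite.of_injective (fun φ (x : s) => φ x) fun φ ψ h =>
    eq_of_eqOn_dense hs fun x hx => congrFun h ⟨x, hx⟩

variable {M N G : Type*} [AddCommGroup M] [AddCommGroup N] [AddCommGroup G]

lemma card_prod : Nat.card (M × N →+ G) = Nat.card (M →+ G) * Nat.card (N →+ G) := by
  simp only [Nat.card_congr (addMonoidHomLequivInt (B := G) ℤ).toEquiv, ← Nat.card_prod]
  exact Nat.card_congr (LinearMap.coprodEquiv ℕ).toEquiv.symm

lemma card_finsupp_int {ι : Type*} [Finite ι] :
    Nat.card ((ι →₀ ℤ) →+ G) = Nat.card G ^ Nat.card ι := by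
  rw [Nat.card_congr (addMonoidHomLequivInt (B := G) ℤ).toEquiv,
    ← Nat.card_congr (Finsupp.lift G ℤ ι).toEquiv, Nat.card_fun]

def quotientClosureEquiv (X : Set M) :
    (M ⧸ AddSubgroup.closure X →+ G) ≃ {φ : M →+ G // ∀ x ∈ X, φ x = 0} where
  toFun ψ := ⟨ψ.comp (QuotientAddGroup.mk' _), fun x hx => by
    simp [(QuotientAddGroup.eq_zero_iff x).mpr (AddSubgroup.subset_closure hx)]⟩
  invFun φ := QuotientAddGroup.lift _ φ.1 ((AddSubgroup.closure_le φ.1.ker).2 φ.2)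
  left_inv ψ := QuotientAddGroup.addMonoidHom_ext _ rfl
  right_inv φ := rfl

end AddMonoidHom

namespace AddCommGroup

variable {M N : Type*} [AddCommGroup M] [AddCommGroup N]

def torsionCongr (e : M ≃+ N) : torsion M ≃+ torsion N :=
  (e.addSubgroupMap (torsion M)).trans (AddEquiv.addSubgroupCongr e.map_torsion)

def torsionProdEquiv [IsAddTorsionFree M] (hN : IsAddTorsion N) : torsion (M × N) ≃+ N where
  toFun x := x.1.2
  invFun y := ⟨(0, y), IsOfFinAddOrder.zero.prod_mk (hN y)⟩
  left_inv x := Subtype.ext (Prod.ext x.2.fst.eq_zero'.symm rfl)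
  right_inv _ := rfl
  map_add' _ _ := rfl

end AddCommGroup

lemma finrank_prod_of_isTorsion {R : Type*} {M N : Type u} [CommRing R] [IsDomain R]
    [AddCommGroup M] [Module R M] [AddCommGroup N] [Module R N] (hN : Module.IsTorsion R N) :
    finrank R (M × N) = finrank R M :=
  congrArg Cardinal.toNat <| by
    rw [LinearMap.rank_eq_of_surjective (f := LinearMap.fst R M N) Prod.fst_surjective,
      LinearMap.ker_fst, rank_range_of_injective _ LinearMap.inr_injective,
      hN.rank_eq_zero, add_zero]

open AddCommGroup AddMonoidHom in
lemma card_addMonoidHom_of_addEquiv_finsupp_prod {Q G : Type*} {D ι : Type u} [AddCommGroup Q]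
    [AddCommGroup D] [Fintype ι] [AddCommGroup G] (hD : IsAddTorsion D) (f : Q ≃+ (ι →₀ ℤ) × D) :
    Nat.card (Q →+ G) = Nat.card (torsion Q →+ G) * Nat.card G ^ finrank ℤ Q := by
  have hrank : finrank ℤ Q = Nat.card ι := by
    rw [f.toIntLinearEquiv.finrank_eq,
      finrank_prod_of_isTorsion (isAddTorsion_iff_isTorsion_int.mp hD), finrank_finsupp_self,
      Nat.card_eq_fintype_card]
  rw [hrank, Nat.card_congr f.addMonoidHomCongrLeftEquiv, card_prod, card_finsupp_int,
    Nat.card_congr ((torsionCongr f).trans (torsionProdEquiv hD)).addMonoidHomCongrLeftEquiv,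
    mul_comm]

open AddCommGroup in
theorem card_addMonoidHom_eq (Q G : Type*) [AddCommGroup Q] [AddGroup.FG Q] [AddCommGroup G] :
    Nat.card (Q →+ G) = Nat.card (torsion Q →+ G) * Nat.card G ^ finrank ℤ Q := by
  obtain ⟨n, ι, _, p, hp, e, ⟨f⟩⟩ := equiv_free_prod_directSum_zmod Q
  have : ∀ i, NeZero (p i ^ e i) := fun i => ⟨pow_ne_zero _ (hp i).ne_zero⟩
  have : Finite (DirectSum ι fun i => ZMod (p i ^ e i)) :=
    Finite.of_equiv _ DFinsupp.equivFunOnFintype.symm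
  exact card_addMonoidHom_of_addEquiv_finsupp_prod isAddTorsion_of_finite f

lemma finrank_quotient_closure (Γ : Type*) [AddCommGroup Γ] [AddGroup.FG Γ] (X : Set Γ) :
    finrank ℤ (Γ ⧸ AddSubgroup.closure X) = finrank ℤ Γ - rk Γ X :=
  have : Module.Finite ℤ Γ := Module.Finite.iff_addGroup_fg.mpr ‹_›
  Submodule.finrank_quotient (AddSubgroup.closure X).toIntSubmodule

lemma card_addMonoidHom_vanishing (Γ G : Type*) [AddCommGroup Γ] [AddGroup.FG Γ] [AddCommGroup G]
    (X : Set Γ) : Nat.card {φ : Γ →+ G // ∀ x ∈ X, φ x = 0} =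
      mult Γ G X * Nat.card G ^ (finrank ℤ Γ - rk Γ X) := by
  rw [← Nat.card_congr (AddMonoidHom.quotientClosureEquiv X), card_addMonoidHom_eq,
    finrank_quotient_closure, mult]

lemma Finset.card_inf_eq_nat_card_subtype {α ι : Type*} [Fintype α] [DecidableEq α] (s : Finset ι)
    (t : ι → Finset α) : #(s.inf t) = Nat.card {x // ∀ i ∈ s, x ∈ t i} := by
  rw [Nat.card_eq_fintype_card, Fintype.card_subtype]
  congr 1
  ext
  simp [mem_inf]

/-- Point counting: for a finite abelian group `G`,
`#M(𝒜; Γ, G) = χ_𝒜^G(#G) = Σ_{𝒮⊆𝒜} (-1)^{#𝒮} m(𝒮;G) (#G)^{r_Γ - r_𝒮}`. -/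
theorem card_complement_eq_char (Γ G : Type*) {ι : Type*} [AddCommGroup Γ] [AddGroup.FG Γ]
    [AddCommGroup G] [Finite G] (A : Finset ι) (a : ι → Γ) :
    (Nat.card {φ : Γ →+ G // ∀ i ∈ A, φ (a i) ≠ 0} : ℤ) =
      ∑ S ∈ A.powerset, (-1 : ℤ) ^ S.card * (mult Γ G (a '' (S : Set ι)) : ℤ) *
        (Nat.card G : ℤ) ^ (Module.finrank ℤ Γ - rk Γ (a '' (S : Set ι))) := by
  classical
  have := Fintype.ofFinite (Γ →+ G)
  let kernel (i : ι) : Finset (Γ →+ G) := {φ | φ (a i) = 0}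
  have hcount (S : Finset ι) : #(S.inf kernel) =
      mult Γ G (a '' (S : Set ι)) * Nat.card G ^ (finrank ℤ Γ - rk Γ (a '' (S : Set ι))) := by
    rw [card_inf_eq_nat_card_subtype, ← card_addMonoidHom_vanishing]
    exact Nat.card_congr (Equiv.subtypeEquivRight fun φ => by simp [kernel])
  have hcompl :
      Nat.card {φ : Γ →+ G // ∀ i ∈ A, φ (a i) ≠ 0} = #(A.inf fun i => (kernel i)ᶜ) := by
    rw [card_inf_eq_nat_card_subtype]
    exact Nat.card_congr (Equiv.subtypeEquivRight fun φ => by simp [kernel])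
  rw [hcompl, inclusion_exclusion_card_inf_compl]
  refine sum_congr rfl fun S _ => ?_
  rw [hcount]
  push_cast
  ring
end

section
/- Let 𝒜 be a finite list of elements in Γ = ℤ^ℓ, let ρ_𝒜 be the lcm of all the last invariant factors d_{𝒮,r_𝒮} over sublists 𝒮 ⊂ 𝒜, and let k ≥ 1 divide ρ_𝒜. Then for any positive integer q with gcd(q, ρ_𝒜) = k, the cardinality #M(𝒜; ℤ^ℓ, ℤ/qℤ) equals χ_𝒜^{ℤ/kℤ}(q) = Σ_{𝒮⊂𝒜} (−1)^{#𝒮} m(𝒮; ℤ/kℤ) q^{ℓ − r_𝒮}. In particular, the k-constituent of the characteristic quasi-polynomial equals the (ℤ/kℤ)-characteristic polynomial χ_𝒜^{ℤ/kℤ}(t). -/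
/-- `ρ_𝒜`: the lcm over all sublists `𝒮 ⊆ 𝒜` of the last invariant factor
`d_{𝒮, r_𝒮}`, i.e. the exponent of the torsion part of `Γ/⟨𝒮⟩`. -/
noncomputable def rho {ι : Type*} (Γ : Type*) [AddCommGroup Γ]
    (A : Finset ι) (a : ι → Γ) : ℕ :=
  A.powerset.lcm fun S =>
    AddMonoid.exponent (AddCommGroup.torsion (Γ ⧸ AddSubgroup.closure (a '' (S : Set ι))))

/-!
Inclusion–exclusion over the conditions `φ (a i) = 0` reduces the count to that of the
homomorphisms `ℤ^ℓ → ℤ/q` vanishing on `a '' S`, i.e. of `Hom(Q, ℤ/q)` with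
`Q = ℤ^ℓ/⟨a '' S⟩`. As `Q` is finitely generated, `Q ≅ Q_tor × ℤ^(ℓ - r_S)`, so this is `#Hom(Q_tor, ℤ/q) · q^(ℓ - r_S)`.
A homomorphism out of `Q_tor` lands in the `e`-torsion of `ℤ/q`, `e` the exponent of `Q_tor`,
which is cyclic of order `gcd(q, e)`; since `e ∣ ρ` and `gcd(q, ρ) = k`, `gcd(q, e) = gcd(k, e)`,
so `ℤ/q` may be replaced by `ℤ/k`.
-/

open Module Submodule

theorem Finset.inclusion_exclusion_natCard_forall_not {ι α : Type*} [Finite α] (s : Finset ι)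
    (P : ι → α → Prop) :
    (Nat.card {x // ∀ i ∈ s, ¬ P i x} : ℤ) =
      ∑ t ∈ s.powerset, (-1 : ℤ) ^ t.card * Nat.card {x // ∀ i ∈ t, P i x} := by
  classical
  cases nonempty_fintype α
  simp only [Nat.card_eq_fintype_card, Fintype.card_subtype]
  convert Finset.inclusion_exclusion_card_inf_compl s (fun i => univ.filter (P i)) using 5 <;>
    ext x <;> simp [Finset.mem_inf]

instance AddMonoidHom.finite_of_fg_s10 {M G : Type*} [AddGroup M] [AddGroup.FG M] [AddMonoid G]
    [Finite G] : Finite (M →+ G) := by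
  obtain ⟨S, hS, hSfin⟩ := AddGroup.fg_iff.mp ‹AddGroup.FG M›
  have := hSfin.to_subtype
  exact Finite.of_injective (fun (φ : M →+ G) (x : S) => φ x) fun φ ψ h =>
    AddMonoidHom.eq_of_eqOn_dense hS fun x hx => congrFun h ⟨x, hx⟩

theorem AddMonoidHom.natCard_forall_eq_zero {Γ G : Type*} [AddCommGroup Γ] [AddGroup G]
    (X : Set Γ) :
    Nat.card {φ : Γ →+ G // ∀ x ∈ X, φ x = 0} = Nat.card (Γ ⧸ AddSubgroup.closure X →+ G) := by
  refine Nat.card_congr ((Equiv.subtypeEquivRight fun φ => ?_).trans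
    ((QuotientAddGroup.mk' _).liftOfSurjective (QuotientAddGroup.mk'_surjective _)))
  rw [QuotientAddGroup.ker_mk', AddSubgroup.closure_le]
  rfl

theorem finrank_quotient_closure_eq_sub {Γ : Type*} [AddCommGroup Γ] [Module.Finite ℤ Γ]
    (X : Set Γ) :
    finrank ℤ (Γ ⧸ AddSubgroup.closure X) = finrank ℤ Γ - rk Γ X :=
  Nat.eq_sub_of_add_eq (AddSubgroup.closure X).toIntSubmodule.finrank_quotient_add_finrank

theorem natCard_linearMap_eq_pow_finrank (R F G : Type*) [Semiring R] [StrongRankCondition R]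
    [AddCommMonoid F] [Module R F] [Module.Free R F] [Module.Finite R F] [AddCommMonoid G]
    [Module R G] :
    Nat.card (F →ₗ[R] G) = Nat.card G ^ finrank R F := by
  rw [← Nat.card_congr ((Free.chooseBasis R F).constr ℕ).toEquiv, Nat.card_fun,
    finrank_eq_card_chooseBasisIndex, ← Nat.card_eq_fintype_card]

noncomputable def Submodule.torsionProdQuotientEquiv (R M : Type*) [CommRing R] [IsDomain R]
    [IsPrincipalIdealRing R] [AddCommGroup M] [Module R M] [Module.Finite R M] :
    (torsion R M × (M ⧸ torsion R M)) ≃ₗ[R] M :=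
  lequivProdOfRightSplitExact (torsion R M).injective_subtype (by rw [range_subtype, ker_mkQ])
    (projective_lifting_property _ LinearMap.id (torsion R M).mkQ_surjective).choose_spec

theorem AddCommGroup.natCard_addMonoidHom_eq_torsion_mul_pow (Q G : Type*) [AddCommGroup Q]
    [Module.Finite ℤ Q] [AddCommGroup G] :
    Nat.card (Q →+ G) =
      Nat.card (AddCommGroup.torsion Q →+ G) * Nat.card G ^ finrank ℤ Q := by
  set T := Submodule.torsion ℤ Q
  have hT : Nat.card (T →ₗ[ℤ] G) = Nat.card (AddCommGroup.torsion Q →+ G) :=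
    Nat.card_congr ((addMonoidHomLequivInt ℤ).symm.toEquiv.trans
      (AddEquiv.addSubgroupCongr (torsion_int (G := Q))).addMonoidHomCongrLeftEquiv)
  calc Nat.card (Q →+ G)
      = Nat.card (T × (Q ⧸ T) →ₗ[ℤ] G) :=
        Nat.card_congr ((addMonoidHomLequivInt ℤ).toEquiv.trans
          ((torsionProdQuotientEquiv ℤ Q).symm.arrowCongr (LinearEquiv.refl ℤ G)).toEquiv)
    _ = Nat.card (T →ₗ[ℤ] G) * Nat.card (Q ⧸ T →ₗ[ℤ] G) := by
        rw [← Nat.card_prod]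
        exact Nat.card_congr (LinearMap.coprodEquiv ℤ).toEquiv.symm
    _ = _ := by
        rw [hT, natCard_linearMap_eq_pow_finrank, finrank_quotient_eq_of_le_torsion le_rfl]

noncomputable def AddMonoidHom.codRestrictNsmulExponentEquiv (T G : Type*) [AddCommGroup T]
    [AddCommGroup G] :
    (T →+ G) ≃ (T →+ (nsmulAddMonoidHom (AddMonoid.exponent T) : G →+ G).ker) where
  toFun φ := φ.codRestrict _ fun t => by
    rw [AddMonoidHom.mem_ker, nsmulAddMonoidHom_apply, ← map_nsmul,
      AddMonoid.exponent_nsmul_eq_zero, map_zero]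
  invFun ψ := (AddSubgroup.subtype _).comp ψ
  left_inv _ := rfl
  right_inv _ := rfl

theorem natCard_addMonoidHom_zmod_eq_of_gcd_exponent_eq (T : Type*) [AddCommGroup T] {q k : ℕ}
    [NeZero q] [NeZero k] (h : q.gcd (AddMonoid.exponent T) = k.gcd (AddMonoid.exponent T)) :
    Nat.card (T →+ ZMod q) = Nat.card (T →+ ZMod k) := by
  have hcard : Nat.card (nsmulAddMonoidHom (AddMonoid.exponent T) : ZMod q →+ ZMod q).ker =
      Nat.card (nsmulAddMonoidHom (AddMonoid.exponent T) : ZMod k →+ ZMod k).ker := by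
    rw [IsAddCyclic.card_nsmulAddMonoidHom_ker, IsAddCyclic.card_nsmulAddMonoidHom_ker,
      Nat.card_zmod, Nat.card_zmod, h]
  exact Nat.card_congr ((AddMonoidHom.codRestrictNsmulExponentEquiv T _).trans
    ((addEquivOfAddCyclicCardEq hcard).addMonoidHomCongrRightEquiv.trans
      (AddMonoidHom.codRestrictNsmulExponentEquiv T _).symm))

theorem constituent_eq_char_general {ι : Type*} (ℓ : ℕ) (A : Finset ι) (a : ι → (Fin ℓ → ℤ))
    (k q : ℕ) (hq : 0 < q)
    (hgcd : Nat.gcd q (rho (Fin ℓ → ℤ) A a) = k) :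
    (Nat.card {φ : (Fin ℓ → ℤ) →+ ZMod q // ∀ i ∈ A, φ (a i) ≠ 0} : ℤ) =
      ∑ S ∈ A.powerset, (-1 : ℤ) ^ S.card *
        (mult (Fin ℓ → ℤ) (ZMod k) (a '' (S : Set ι)) : ℤ) *
        (q : ℤ) ^ (ℓ - rk (Fin ℓ → ℤ) (a '' (S : Set ι))) := by
  have : NeZero q := ⟨hq.ne'⟩
  have : NeZero k := ⟨hgcd ▸ (Nat.gcd_pos_of_pos_left _ hq).ne'⟩
  rw [Finset.inclusion_exclusion_natCard_forall_not A fun i (φ : (Fin ℓ → ℤ) →+ ZMod q) =>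
    φ (a i) = 0]
  refine Finset.sum_congr rfl fun S hS => ?_
  set Q := (Fin ℓ → ℤ) ⧸ AddSubgroup.closure (a '' (S : Set ι))
  have hexp : AddMonoid.exponent (AddCommGroup.torsion Q) ∣ rho (Fin ℓ → ℤ) A a :=
    Finset.dvd_lcm hS
  have hgcd_exp : q.gcd (AddMonoid.exponent (AddCommGroup.torsion Q)) =
      k.gcd (AddMonoid.exponent (AddCommGroup.torsion Q)) := by
    rw [← hgcd, Nat.gcd_assoc, Nat.gcd_eq_right hexp]
  have hvanish : Nat.card {φ : (Fin ℓ → ℤ) →+ ZMod q // ∀ i ∈ S, φ (a i) = 0} =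
      Nat.card {φ : (Fin ℓ → ℤ) →+ ZMod q // ∀ x ∈ a '' (S : Set ι), φ x = 0} := by
    simp only [Set.forall_mem_image, Finset.mem_coe]
  rw [hvanish, AddMonoidHom.natCard_forall_eq_zero,
    AddCommGroup.natCard_addMonoidHom_eq_torsion_mul_pow,
    natCard_addMonoidHom_zmod_eq_of_gcd_exponent_eq _ hgcd_exp, Nat.card_zmod,
    finrank_quotient_closure_eq_sub, finrank_fin_fun]
  push_cast [mult]
  ring

/-- The constituents of the characteristic quasi-polynomial: if `gcd(q, ρ_𝒜) = k` then
`#M(𝒜; ℤ^ℓ, ℤ/qℤ) = χ_𝒜^{ℤ/kℤ}(q) = Σ_{𝒮⊆𝒜} (-1)^{#𝒮} m(𝒮; ℤ/kℤ) q^{ℓ - r_𝒮}`. -/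
theorem constituent_eq_char {ι : Type*} (ℓ : ℕ) (A : Finset ι) (a : ι → (Fin ℓ → ℤ))
    (k q : ℕ) (hk : 1 ≤ k) (hkdvd : k ∣ rho (Fin ℓ → ℤ) A a) (hq : 0 < q)
    (hgcd : Nat.gcd q (rho (Fin ℓ → ℤ) A a) = k) :
    (Nat.card {φ : (Fin ℓ → ℤ) →+ ZMod q // ∀ i ∈ A, φ (a i) ≠ 0} : ℤ) =
      ∑ S ∈ A.powerset, (-1 : ℤ) ^ S.card *
        (mult (Fin ℓ → ℤ) (ZMod k) (a '' (S : Set ι)) : ℤ) *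
        (q : ℤ) ^ (ℓ - rk (Fin ℓ → ℤ) (a '' (S : Set ι))) :=
  constituent_eq_char_general ℓ A a k q hq hgcd
end

section
/- Let 𝒜 be a finite list of elements in a finitely generated abelian group Γ with invariant factors d_{𝒮,1} | ⋯ | d_{𝒮,k_𝒮} of (Γ/⟨𝒮⟩)_tor for each sublist 𝒮, and set ρ_𝒜 = lcm{d_{𝒮,k_𝒮} : 𝒮 ⊂ 𝒜}. Then m(𝒮; ℤ/ρ_𝒜ℤ) = #(Γ/⟨𝒮⟩)_tor for every sublist 𝒮 ⊂ 𝒜, and consequently T_𝒜^{ℤ/ρ_𝒜ℤ}(x,y) = T_𝒜^{arith}(x,y). -/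
/-- The `G`-Tutte polynomial, evaluated at integers `x, y`. -/
noncomputable def Tpoly {ι Γ : Type*} [AddCommGroup Γ] (G : Type*) [AddCommGroup G]
    (A : Finset ι) (a : ι → Γ) (x y : ℤ) : ℤ :=
  ∑ S ∈ A.powerset, (mult Γ G (a '' (S : Set ι)) : ℤ) *
    (x - 1) ^ (rk Γ (a '' (A : Set ι)) - rk Γ (a '' (S : Set ι))) *
    (y - 1) ^ (S.card - rk Γ (a '' (S : Set ι)))

instance AddCommGroup.finite_torsion_of_fg (G : Type*) [AddCommGroup G] [AddGroup.FG G] :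
    Finite (AddCommGroup.torsion G) := by
  have : Module.Finite ℤ G := Module.Finite.iff_addGroup_fg.mpr ‹_›
  have : Finite (Submodule.torsion ℤ G) :=
    Module.finite_of_fg_torsion _ Submodule.torsion_isTorsion
  rwa [← Submodule.torsion_int]

theorem IsCyclic.hasEnoughRootsOfUnity_natCard (G : Type*) [CommGroup G] [Finite G]
    [IsCyclic G] : HasEnoughRootsOfUnity G (Nat.card G) where
  prim := by
    obtain ⟨g, hg⟩ := IsCyclic.exists_generator (α := G)
    exact ⟨g, orderOf_eq_card_of_forall_mem_zpowers hg ▸ IsPrimitiveRoot.orderOf g⟩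
  cyc :=
    have : IsCyclic Gˣ := isCyclic_of_surjective _ (toUnits : G ≃* Gˣ).surjective
    inferInstance

theorem IsAddCyclic.card_addMonoidHom_of_exponent_dvd {T G : Type*} [AddCommGroup T] [Finite T]
    [AddCommGroup G] [Finite G] [IsAddCyclic G] (h : AddMonoid.exponent T ∣ Nat.card G) :
    Nat.card (T →+ G) = Nat.card T := by
  have : HasEnoughRootsOfUnity (Multiplicative G) (Nat.card G) :=
    IsCyclic.hasEnoughRootsOfUnity_natCard (Multiplicative G)
  have : HasEnoughRootsOfUnity (Multiplicative G) (Monoid.exponent (Multiplicative T)) :=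
    HasEnoughRootsOfUnity.of_dvd _ (by simpa using h)
  calc Nat.card (T →+ G)
      = Nat.card (Multiplicative T →* (Multiplicative G)ˣ) :=
        Nat.card_congr <|
          AddMonoidHom.toMultiplicative.trans (MulEquiv.monoidHomCongrRight toUnits).toEquiv
    _ = Nat.card T := CommGroup.card_monoidHom_of_hasEnoughRootsOfUnity _ _

section rho

variable {ι Γ : Type*} [AddCommGroup Γ] [AddGroup.FG Γ] (A : Finset ι) (a : ι → Γ)

theorem rho_ne_zero : rho Γ A a ≠ 0 := by
  rw [rho, Ne, Finset.lcm_eq_zero_iff]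
  rintro ⟨S, -, hS⟩
  exact AddMonoid.exponent_ne_zero_of_finite hS

theorem mult_zmod_rho_eq_card_torsion {S : Finset ι} (hS : S ∈ A.powerset) :
    mult Γ (ZMod (rho Γ A a)) (a '' (S : Set ι)) =
      Nat.card (AddCommGroup.torsion (Γ ⧸ AddSubgroup.closure (a '' (S : Set ι)))) := by
  have : NeZero (rho Γ A a) := ⟨rho_ne_zero A a⟩
  refine IsAddCyclic.card_addMonoidHom_of_exponent_dvd ?_
  rw [Nat.card_zmod]
  exact Finset.dvd_lcm hS

end rho

/-- `m(𝒮; ℤ/ρ_𝒜ℤ) = #(Γ/⟨𝒮⟩)_tor` for all `𝒮 ⊆ 𝒜`, and hence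
`T_𝒜^{ℤ/ρ_𝒜ℤ}(x,y) = T_𝒜^{arith}(x,y)`. -/
theorem zmod_rho_tutte_eq_arithmetic_tutte {ι Γ : Type*} [AddCommGroup Γ] [AddGroup.FG Γ]
    (A : Finset ι) (a : ι → Γ) :
    (∀ S ∈ A.powerset, mult Γ (ZMod (rho Γ A a)) (a '' (S : Set ι)) =
      Nat.card (AddCommGroup.torsion (Γ ⧸ AddSubgroup.closure (a '' (S : Set ι))))) ∧
    ∀ x y : ℤ, Tpoly (ZMod (rho Γ A a)) A a x y =
      ∑ S ∈ A.powerset,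
        (Nat.card (AddCommGroup.torsion (Γ ⧸ AddSubgroup.closure (a '' (S : Set ι)))) : ℤ) *
        (x - 1) ^ (rk Γ (a '' (A : Set ι)) - rk Γ (a '' (S : Set ι))) *
        (y - 1) ^ (S.card - rk Γ (a '' (S : Set ι))) := by
  have hmult (S : Finset ι) (hS : S ∈ A.powerset) := mult_zmod_rho_eq_card_torsion A a hS
  exact ⟨hmult, fun x y => Finset.sum_congr rfl fun S hS => by rw [hmult S hS]⟩
end

section
/- Let 𝒜 be a finite list in a finitely generated abelian group Γ, G a torsion-wise finite abelian group, and α ∈ 𝒜. Let 𝒜' = 𝒜\{α} and 𝒜'' the contraction in Γ'' = Γ/⟨α⟩. Then the G-Tutte polynomial satisfies the deletion–contraction formula: T_𝒜^G(x,y) = T_{𝒜'}^G(x,y) + (y−1)T_{𝒜''}^G(x,y) if α is a loop (α ∈ Γ_tor); T_𝒜^G(x,y) = (x−1)T_{𝒜'}^G(x,y) + T_{𝒜''}^G(x,y) if α is a coloop (r_𝒜 = r_{𝒜'} + 1); and T_𝒜^G(x,y) = T_{𝒜'}^G(x,y) + T_{𝒜''}^G(x,y) if α is proper (neither loop nor coloop).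 -/
def TorsionwiseFinite (G : Type*) [AddCommGroup G] : Prop :=
  ∀ d : ℕ, 0 < d → Finite {x : G // d • x = 0}

/-!
Split the subsets of `𝒜` according to whether they contain `α`. Those that do not make up the
deletion term. For `S ∌ α`, the image of `⟨S ∪ {α}⟩` in `Γ/⟨α⟩` is `⟨S̄⟩`, so the third isomorphism
theorem gives `m(S ∪ {α}) = m''(S̄)`, and rank-nullity for `⟨S ∪ {α}⟩ → Γ/⟨α⟩`, whose kernel is
`⟨α⟩`, gives `r_{S ∪ {α}} = r''_{S̄} + r_α` with `r_α ∈ {0, 1}`, and `r_α = 0` exactly for a loop.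
Hence `T_𝒜 = (x-1)^(r_𝒜 - r_𝒜') T_𝒜' + (y-1)^(1 - r_α) T_𝒜''` for every `α ∈ 𝒜`, and the three
cases only differ in which exponents vanish.
-/

open AddSubgroup Module

universe u v

theorem Submodule.finrank_map_add_finrank_ker_of_le {R : Type v} {M N : Type u} [Ring R]
    [StrongRankCondition R] [HasRankNullity.{u} R] [AddCommGroup M] [Module R M]
    [AddCommGroup N] [Module R N] (f : M →ₗ[R] N) {p : Submodule R M} [Module.Finite R p]
    (h : LinearMap.ker f ≤ p) :
    finrank R (p.map f) + finrank R (LinearMap.ker f) = finrank R p := by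
  have := (LinearMap.ker (f.domRestrict p)).finrank_quotient_add_finrank
  rwa [(f.domRestrict p).quotKerEquivRange.finrank_eq, LinearMap.range_domRestrict,
    LinearMap.ker_domRestrict, (Submodule.comapSubtypeEquivOfLe h).finrank_eq] at this

section Rank

variable {Γ : Type u} {Δ : Type*} [AddCommGroup Γ] [AddCommGroup Δ]

theorem rk_eq_finrank_span (X : Set Γ) : rk Γ X = finrank ℤ (Submodule.span ℤ X) := by
  rw [rk, ← AddSubgroup.toIntSubmodule_closure]
  rfl

theorem rk_singleton_le_one (α : Γ) : rk Γ {α} ≤ 1 := by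
  rw [rk_eq_finrank_span]
  simpa using finrank_span_le_card (R := ℤ) ({α} : Set Γ)

theorem rk_singleton_eq_zero_iff (α : Γ) : rk Γ {α} = 0 ↔ α ∈ AddCommGroup.torsion Γ := by
  rw [rk_eq_finrank_span, Module.finrank_eq_zero_iff, AddCommGroup.mem_torsion,
    isOfFinAddOrder_iff_zsmul_eq_zero]
  constructor
  · intro h
    obtain ⟨n, hn, h⟩ := h ⟨α, Submodule.mem_span_singleton_self α⟩
    exact ⟨n, hn, congrArg Subtype.val h⟩
  · rintro ⟨n, hn, h⟩ ⟨x, hx⟩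
    obtain ⟨c, rfl⟩ := Submodule.mem_span_singleton.mp hx
    exact ⟨n, hn, Subtype.ext (by simp [smul_comm n c, h])⟩

theorem rk_image_le_card {ι : Type*} (a : ι → Γ) (S : Finset ι) : rk Γ (a '' S) ≤ S.card := by
  classical
  rw [rk_eq_finrank_span, ← Finset.coe_image]
  exact (finrank_span_finset_le_card _).trans Finset.card_image_le

theorem rk_mono {s t : Set Γ} (ht : t.Finite) (h : s ⊆ t) : rk Γ s ≤ rk Γ t := by
  have := Module.Finite.span_of_finite ℤ ht
  rw [rk_eq_finrank_span, rk_eq_finrank_span]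
  exact Submodule.finrank_mono (Submodule.span_mono h)

theorem rk_image_le (f : Γ →+ Δ) {s : Set Γ} (hs : s.Finite) : rk Δ (f '' s) ≤ rk Γ s := by
  have := Module.Finite.span_of_finite ℤ hs
  rw [rk_eq_finrank_span, rk_eq_finrank_span, ← f.coe_toIntLinearMap, ← Submodule.map_span]
  exact Submodule.finrank_map_le _ _

theorem mk'_closure_singleton_self (α : Γ) : QuotientAddGroup.mk' (closure {α}) α = 0 :=
  (QuotientAddGroup.eq_zero_iff α).mpr (subset_closure rfl)

theorem rk_insert (α : Γ) {s : Set Γ} (hs : s.Finite) :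
    rk Γ (insert α s) =
      rk (Γ ⧸ closure {α}) (QuotientAddGroup.mk' (closure {α}) '' s) + rk Γ {α} := by
  set f := (QuotientAddGroup.mk' (closure {α})).toIntLinearMap
  have := Module.Finite.span_of_finite ℤ (hs.insert α)
  have hker : LinearMap.ker f = Submodule.span ℤ {α} := by
    ext x
    rw [← AddSubgroup.toIntSubmodule_closure]
    exact QuotientAddGroup.eq_zero_iff x
  have hmap : (Submodule.span ℤ (insert α s)).map f = Submodule.span ℤ (f '' s) := by
    have hα : f α = 0 := mk'_closure_singleton_self α
    rw [Submodule.map_span, Set.image_insert_eq, hα, Submodule.span_insert_zero]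
  rw [rk_eq_finrank_span, rk_eq_finrank_span, rk_eq_finrank_span, ← hker,
    ← Submodule.finrank_map_add_finrank_ker_of_le f (hker ▸ Submodule.span_mono (by simp)), hmap]
  rfl

theorem rk_insert_le (α : Γ) {s : Set Γ} (hs : s.Finite) :
    rk Γ (insert α s) ≤ rk Γ s + rk Γ {α} := by
  rw [rk_insert α hs]
  exact Nat.add_le_add_right (rk_image_le _ hs) _

end Rank

section Multiplicity

variable {Γ Δ : Type*} [AddCommGroup Γ] [AddCommGroup Δ] (G : Type*) [AddCommGroup G]

theorem mult_congr {X : Set Γ} {Y : Set Δ} (e : Γ ⧸ closure X ≃+ Δ ⧸ closure Y) :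
    mult Γ G X = mult Δ G Y :=
  Nat.card_congr <| AddEquiv.addMonoidHomCongrLeftEquiv <|
    (e.addSubgroupMap _).trans (AddEquiv.addSubgroupCongr e.map_torsion)

theorem mult_insert (α : Γ) (s : Set Γ) :
    mult Γ G (insert α s) = mult (Γ ⧸ closure {α}) G (QuotientAddGroup.mk' (closure {α}) '' s) := by
  have hle : closure {α} ≤ closure (insert α s) := closure_mono (by simp)
  have hmap : (closure (insert α s)).map (QuotientAddGroup.mk' (closure {α})) =
      closure (QuotientAddGroup.mk' (closure {α}) '' s) := by
    rw [AddMonoidHom.map_closure, Set.image_insert_eq, mk'_closure_singleton_self, Set.insert_eq,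
      AddSubgroup.closure_union, closure_singleton_zero, bot_sup_eq]
  exact mult_congr G <| (QuotientAddGroup.quotientQuotientEquivQuotient _ _ hle).symm.trans
    (QuotientAddGroup.quotientAddEquivOfEq hmap)

end Multiplicity

theorem Tpoly_eq_deletion_add_contraction {ι : Type*} {Γ : Type u} [DecidableEq ι]
    [AddCommGroup Γ] (G : Type*) [AddCommGroup G] {A : Finset ι} (a : ι → Γ) {i₀ : ι}
    (hi₀ : i₀ ∈ A) (x y : ℤ) :
    Tpoly G A a x y =
      (x - 1) ^ (rk Γ (a '' A) - rk Γ (a '' (A.erase i₀))) * Tpoly G (A.erase i₀) a x y +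
      (y - 1) ^ (1 - rk Γ {a i₀}) *
        Tpoly G (A.erase i₀) (fun i => QuotientAddGroup.mk' (closure {a i₀}) (a i)) x y := by
  set B := A.erase i₀
  set N := closure {a i₀}
  set b := fun i => QuotientAddGroup.mk' N (a i)
  have image_insert (S : Finset ι) : a '' ↑(insert i₀ S) = insert (a i₀) (a '' S) := by
    rw [Finset.coe_insert, Set.image_insert_eq]
  have rk_insert' (S : Finset ι) :
      rk Γ (a '' ↑(insert i₀ S)) = rk (Γ ⧸ N) (b '' S) + rk Γ {a i₀} := by
    rw [image_insert, rk_insert _ (S.finite_toSet.image a), Set.image_image]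
  have mult_insert' (S : Finset ι) : mult Γ G (a '' ↑(insert i₀ S)) = mult (Γ ⧸ N) G (b '' S) := by
    rw [image_insert, mult_insert, Set.image_image]
  have hA : A = insert i₀ B := (Finset.insert_erase hi₀).symm
  have hrB : rk Γ (a '' B) ≤ rk Γ (a '' A) :=
    rk_mono (A.finite_toSet.image a) (Set.image_mono (A.erase_subset i₀))
  have hd : rk Γ {a i₀} ≤ 1 := rk_singleton_le_one _
  rw [Tpoly, hA, Finset.sum_powerset_insert (A.notMem_erase i₀), ← hA, Tpoly, Tpoly,
    Finset.mul_sum, Finset.mul_sum]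
  congr 1
  · refine Finset.sum_congr rfl fun S hS => ?_
    have hrS : rk Γ (a '' S) ≤ rk Γ (a '' B) :=
      rk_mono (B.finite_toSet.image a) (Set.image_mono (Finset.mem_powerset.mp hS))
    rw [show rk Γ (a '' A) - rk Γ (a '' S) =
      (rk Γ (a '' A) - rk Γ (a '' B)) + (rk Γ (a '' B) - rk Γ (a '' S)) by omega, pow_add]
    ring
  · refine Finset.sum_congr rfl fun S hS => ?_
    have hiS : i₀ ∉ S := fun h => A.notMem_erase i₀ (Finset.mem_powerset.mp hS h)
    have hrS : rk (Γ ⧸ N) (b '' S) ≤ S.card := rk_image_le_card b S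
    rw [mult_insert', hA, rk_insert', rk_insert', Finset.card_insert_of_notMem hiS,
      Nat.add_sub_add_right, show S.card + 1 - (rk (Γ ⧸ N) (b '' S) + rk Γ {a i₀}) =
      (1 - rk Γ {a i₀}) + (S.card - rk (Γ ⧸ N) (b '' S)) by omega, pow_add]
    ring

theorem tutte_deletion_contraction_general {ι Γ : Type*} [DecidableEq ι] [AddCommGroup Γ]
    (G : Type*) [AddCommGroup G]
    (A : Finset ι) (a : ι → Γ) (i₀ : ι) (hi₀ : i₀ ∈ A) :
    ∀ x y : ℤ,
      (a i₀ ∈ AddCommGroup.torsion Γ →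
        Tpoly G A a x y = Tpoly G (A.erase i₀) a x y +
          (y - 1) * Tpoly G (A.erase i₀)
            (fun i => QuotientAddGroup.mk' (AddSubgroup.closure ({a i₀} : Set Γ)) (a i)) x y) ∧
      (rk Γ (a '' (A : Set ι)) = rk Γ (a '' ((A.erase i₀) : Set ι)) + 1 →
        Tpoly G A a x y = (x - 1) * Tpoly G (A.erase i₀) a x y +
          Tpoly G (A.erase i₀)
            (fun i => QuotientAddGroup.mk' (AddSubgroup.closure ({a i₀} : Set Γ)) (a i)) x y) ∧
      (a i₀ ∉ AddCommGroup.torsion Γ ∧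
          rk Γ (a '' (A : Set ι)) ≠ rk Γ (a '' ((A.erase i₀) : Set ι)) + 1 →
        Tpoly G A a x y = Tpoly G (A.erase i₀) a x y +
          Tpoly G (A.erase i₀)
            (fun i => QuotientAddGroup.mk' (AddSubgroup.closure ({a i₀} : Set Γ)) (a i)) x y) := by
  intro x y
  rw [Tpoly_eq_deletion_add_contraction G a hi₀ x y, ← rk_singleton_eq_zero_iff]
  have hd : rk Γ {a i₀} ≤ 1 := rk_singleton_le_one _
  have hle : rk Γ (a '' (A.erase i₀)) ≤ rk Γ (a '' A) :=
    rk_mono (A.finite_toSet.image a) (Set.image_mono (A.erase_subset i₀))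
  have hge : rk Γ (a '' A) ≤ rk Γ (a '' (A.erase i₀)) + rk Γ {a i₀} := by
    conv_lhs => rw [← Finset.insert_erase hi₀, Finset.coe_insert, Set.image_insert_eq]
    exact rk_insert_le _ ((A.erase i₀).finite_toSet.image a)
  refine ⟨fun hloop => ?_, fun hcoloop => ?_, fun ⟨hproper, hnot_coloop⟩ => ?_⟩
  · rw [show rk Γ (a '' A) - rk Γ (a '' (A.erase i₀)) = 0 by omega, hloop]
    ring
  · rw [hcoloop, Nat.add_sub_cancel_left, show 1 - rk Γ {a i₀} = 0 by omega]
    ring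
  · rw [show rk Γ (a '' A) - rk Γ (a '' (A.erase i₀)) = 0 by omega,
      show 1 - rk Γ {a i₀} = 0 by omega]
    ring

/-- Deletion-contraction for the `G`-Tutte polynomial: with `𝒜' = 𝒜 \ {α}` and
`𝒜''` the contraction in `Γ/⟨α⟩`, `T_𝒜^G = T_{𝒜'}^G + (y-1)T_{𝒜''}^G` if `α` is a loop,
`T_𝒜^G = (x-1)T_{𝒜'}^G + T_{𝒜''}^G` if `α` is a coloop, and
`T_𝒜^G = T_{𝒜'}^G + T_{𝒜''}^G` if `α` is proper. -/
theorem tutte_deletion_contraction {ι Γ : Type*} [DecidableEq ι] [AddCommGroup Γ]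
    [AddGroup.FG Γ] (G : Type*) [AddCommGroup G] (hG : TorsionwiseFinite G)
    (A : Finset ι) (a : ι → Γ) (i₀ : ι) (hi₀ : i₀ ∈ A) :
    ∀ x y : ℤ,
      (a i₀ ∈ AddCommGroup.torsion Γ →
        Tpoly G A a x y = Tpoly G (A.erase i₀) a x y +
          (y - 1) * Tpoly G (A.erase i₀)
            (fun i => QuotientAddGroup.mk' (AddSubgroup.closure ({a i₀} : Set Γ)) (a i)) x y) ∧
      (rk Γ (a '' (A : Set ι)) = rk Γ (a '' ((A.erase i₀) : Set ι)) + 1 →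
        Tpoly G A a x y = (x - 1) * Tpoly G (A.erase i₀) a x y +
          Tpoly G (A.erase i₀)
            (fun i => QuotientAddGroup.mk' (AddSubgroup.closure ({a i₀} : Set Γ)) (a i)) x y) ∧
      (a i₀ ∉ AddCommGroup.torsion Γ ∧
          rk Γ (a '' (A : Set ι)) ≠ rk Γ (a '' ((A.erase i₀) : Set ι)) + 1 →
        Tpoly G A a x y = Tpoly G (A.erase i₀) a x y +
          Tpoly G (A.erase i₀)
            (fun i => QuotientAddGroup.mk' (AddSubgroup.closure ({a i₀} : Set Γ)) (a i)) x y) :=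
  tutte_deletion_contraction_general G A a i₀ hi₀
end

section
/- Let Γ be a finitely generated abelian group, 𝒜 a finite list in Γ, G a torsion-wise finite abelian group, α ∈ 𝒜, and 𝒜', 𝒜'' the deletion and contraction. Then the G-characteristic polynomials satisfy χ_𝒜^G(t) = χ_{𝒜'}^G(t) − χ_{𝒜''}^G(t). -/
/-- The `G`-characteristic polynomial `χ_𝒜^G(t) = Σ_𝒮 (-1)^{#𝒮} m(𝒮;G) t^{r_Γ - r_𝒮}`,
evaluated at an integer `t`. -/
noncomputable def chipoly {ι Γ : Type*} [AddCommGroup Γ] (G : Type*) [AddCommGroup G]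
    (A : Finset ι) (a : ι → Γ) (t : ℤ) : ℤ :=
  ∑ S ∈ A.powerset, (-1 : ℤ) ^ S.card * (mult Γ G (a '' (S : Set ι)) : ℤ) *
    t ^ (Module.finrank ℤ Γ - rk Γ (a '' (S : Set ι)))

open AddSubgroup QuotientAddGroup

section

variable {M N : Type*} [AddCommGroup M] [AddCommGroup N]

noncomputable def AddEquiv.torsionCongr (e : M ≃+ N) :
    AddCommGroup.torsion M ≃+ AddCommGroup.torsion N :=
  (e.addSubgroupMap _).trans (AddEquiv.addSubgroupCongr e.map_torsion)

lemma finrank_sub_rk [AddGroup.FG M] (X : Set M) :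
    Module.finrank ℤ M - rk M X = Module.finrank ℤ (M ⧸ closure X) := by
  have : Module.finrank ℤ (M ⧸ closure X) + rk M X = Module.finrank ℤ M :=
    (toIntSubmodule (closure X)).finrank_quotient_add_finrank
  omega

variable (α : M) (X : Set M)

lemma closure_image_mk_closure_singleton :
    closure (mk' (closure {α}) '' X) = (closure (insert α X)).map (mk' (closure {α})) := by
  have hα : mk' (closure {α}) α = 0 := (eq_zero_iff α).mpr (subset_closure rfl)
  rw [AddMonoidHom.map_closure, Set.image_insert_eq, hα, Set.insert_eq, AddSubgroup.closure_union,
    closure_singleton_zero, bot_sup_eq]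

noncomputable def quotientClosureInsertEquiv :
    (M ⧸ closure (insert α X)) ≃+ ((M ⧸ closure {α}) ⧸ closure (mk' (closure {α}) '' X)) :=
  (quotientQuotientEquivQuotient _ _
      (closure_mono (Set.singleton_subset_iff.mpr (Set.mem_insert α X)))).symm.trans
    (quotientAddEquivOfEq (closure_image_mk_closure_singleton α X).symm)

lemma mult_insert_eq_mult_quotient (G : Type*) [AddCommGroup G] :
    mult M G (insert α X) = mult (M ⧸ closure {α}) G (mk' (closure {α}) '' X) :=
  Nat.card_congr <| AddEquiv.addMonoidHomCongrLeftEquiv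
    (AddEquiv.torsionCongr (quotientClosureInsertEquiv α X))

lemma finrank_sub_rk_insert_eq_quotient [AddGroup.FG M] :
    Module.finrank ℤ M - rk M (insert α X)
      = Module.finrank ℤ (M ⧸ closure {α}) - rk (M ⧸ closure {α}) (mk' (closure {α}) '' X) := by
  rw [finrank_sub_rk, finrank_sub_rk]
  exact (quotientClosureInsertEquiv α X).toIntLinearEquiv.finrank_eq

end

theorem char_deletion_contraction_general {ι Γ : Type*} [DecidableEq ι] [AddCommGroup Γ]
    [AddGroup.FG Γ] (G : Type*) [AddCommGroup G]
    (A : Finset ι) (a : ι → Γ) (i₀ : ι) (hi₀ : i₀ ∈ A) (t : ℤ) :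
    chipoly G A a t = chipoly G (A.erase i₀) a t -
      chipoly G (A.erase i₀)
        (fun i => QuotientAddGroup.mk' (AddSubgroup.closure ({a i₀} : Set Γ)) (a i)) t := by
  set π := mk' (closure ({a i₀} : Set Γ))
  obtain ⟨B, hi₀B, rfl⟩ : ∃ B, i₀ ∉ B ∧ A = insert i₀ B :=
    ⟨A.erase i₀, A.notMem_erase i₀, (Finset.insert_erase hi₀).symm⟩
  rw [Finset.erase_insert hi₀B, chipoly, Finset.sum_powerset_insert hi₀B, sub_eq_add_neg,
    chipoly, chipoly, ← Finset.sum_neg_distrib]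
  congr 1
  refine Finset.sum_congr rfl fun S hS => ?_
  have hi₀S : i₀ ∉ S := fun h => hi₀B (Finset.mem_powerset.mp hS h)
  have himage : a '' ↑(insert i₀ S) = insert (a i₀) (a '' ↑S) := by
    rw [Finset.coe_insert, Set.image_insert_eq]
  rw [Finset.card_insert_of_notMem hi₀S, himage, ← Set.image_image π a,
    mult_insert_eq_mult_quotient, finrank_sub_rk_insert_eq_quotient, pow_succ]
  ring

/-- Deletion-contraction for the `G`-characteristic polynomial:
`χ_𝒜^G(t) = χ_{𝒜'}^G(t) - χ_{𝒜''}^G(t)`. -/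
theorem char_deletion_contraction {ι Γ : Type*} [DecidableEq ι] [AddCommGroup Γ]
    [AddGroup.FG Γ] (G : Type*) [AddCommGroup G] (hG : TorsionwiseFinite G)
    (A : Finset ι) (a : ι → Γ) (i₀ : ι) (hi₀ : i₀ ∈ A) (t : ℤ) :
    chipoly G A a t = chipoly G (A.erase i₀) a t -
      chipoly G (A.erase i₀)
        (fun i => QuotientAddGroup.mk' (AddSubgroup.closure ({a i₀} : Set Γ)) (a i)) t :=
  char_deletion_contraction_general G A a i₀ hi₀ t
end

section
/- Let 𝒜 be a finite list in Γ, G a torsion-wise finite divisible abelian group (the multiplication-by-k map is surjective on G for every k ≥ 1). Suppose 𝒮 ⊂ 𝒯 ⊂ 𝒜 with 𝒯 = 𝒮 ⊔ ℬ ⊔ 𝒞 such that for all 𝒮 ⊂ ℛ ⊂ 𝒯, r_ℛ = r_𝒮 + #(ℛ ∩ ℬ). Then m(𝒮; G) · m(𝒯; G) = m(𝒮 ⊔ ℬ; G) · m(𝒮 ⊔ 𝒞; G). -/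
/-!
Write `K_R` for the subgroup generated by `a '' R` and `sat K = {x | ∃ n > 0, n • x ∈ K}`, so that
the torsion subgroup of `Γ ⧸ K` is `sat K ⧸ K`. The rank hypotheses give `K_{S ∪ C} ⊆ sat K_S` and
make the images of `a '' B` in `Γ ⧸ K_S` linearly independent, whence
`K_{S ∪ B} ∩ sat K_S = K_S`. So the torsion of `Γ ⧸ K_S` embeds into that of `Γ ⧸ K_{S ∪ B}`, the
torsion of `Γ ⧸ K_{S ∪ C}` into that of `Γ ⧸ K_{S ∪ B ∪ C}`, and both cokernels are
`sat K_{S ∪ B} ⧸ (sat K_S + K_{S ∪ B})`. Since `G` is an injective `ℤ`-module, `#Hom(-, G)` is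
multiplicative along short exact sequences.
-/

open Module AddCommGroup

section Divisible

variable {G : Type*} [AddCommGroup G] [DivisibleBy G ℤ]

theorem card_addMonoidHom_eq_mul_of_addSubgroup {B : Type*} [AddCommGroup B]
    (H : AddSubgroup B) :
    Nat.card (B →+ G) = Nat.card (H →+ G) * Nat.card (B ⧸ H →+ G) := by
  have hsurj : Function.Surjective (AddMonoidHom.domRestrictHom H G) := fun f =>
    (Module.Baer.of_divisible G).extension_property_addMonoidHom H.subtype H.subtype_injective f
  rw [AddSubgroup.card_eq_card_quotient_mul_card_addSubgroup (AddMonoidHom.domRestrictHom H G).ker,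
    Nat.card_congr (QuotientAddGroup.quotientKerEquivOfSurjective _ hsurj).toEquiv,
    Nat.card_congr (AddMonoidHom.domRestrictHomKerEquiv G H).toEquiv]

theorem card_addMonoidHom_eq_mul_of_injective {A B : Type*} [AddCommGroup A]
    [AddCommGroup B] {f : A →+ B} (hf : Function.Injective f) :
    Nat.card (B →+ G) = Nat.card (A →+ G) * Nat.card (B ⧸ f.range →+ G) := by
  rw [card_addMonoidHom_eq_mul_of_addSubgroup f.range,
    Nat.card_congr (AddMonoidHom.ofInjective hf).symm.addMonoidHomCongrLeftEquiv]

end Divisible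

theorem AddMonoidHom.finrank_range_add_finrank_ker {A B : Type*} [AddCommGroup A]
    [Module.Finite ℤ A] [AddCommGroup B] (f : A →+ B) :
    finrank ℤ f.range + finrank ℤ f.ker = finrank ℤ A :=
  f.toIntLinearMap.quotKerEquivRange.finrank_eq ▸
    (LinearMap.ker f.toIntLinearMap).finrank_quotient_add_finrank

namespace AddSubgroup

variable {Γ : Type*} [AddCommGroup Γ] {K K' : AddSubgroup Γ}

def saturation (K : AddSubgroup Γ) : AddSubgroup Γ :=
  (torsion (Γ ⧸ K)).comap (QuotientAddGroup.mk' K)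

theorem mem_saturation {x : Γ} : x ∈ K.saturation ↔ ∃ n : ℕ, 0 < n ∧ n • x ∈ K := by
  simp only [saturation, mem_comap, mem_torsion, isOfFinAddOrder_iff_nsmul_eq_zero,
    QuotientAddGroup.mk'_apply, ← QuotientAddGroup.mk_nsmul, QuotientAddGroup.eq_zero_iff]

theorem le_saturation : K ≤ K.saturation := fun x hx =>
  mem_saturation.mpr ⟨1, one_pos, by rwa [one_nsmul]⟩

theorem saturation_le_saturation_of_le_saturation (h : K ≤ K'.saturation) :
    K.saturation ≤ K'.saturation := by
  intro x hx
  obtain ⟨n, hn, hnx⟩ := mem_saturation.mp hx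
  obtain ⟨m, hm, hmnx⟩ := mem_saturation.mp (h hnx)
  exact mem_saturation.mpr ⟨m * n, Nat.mul_pos hm hn, by rwa [mul_nsmul']⟩

theorem saturation_mono (h : K ≤ K') : K.saturation ≤ K'.saturation :=
  saturation_le_saturation_of_le_saturation (h.trans le_saturation)

section TorsionQuotient

def toTorsionQuotient (K : AddSubgroup Γ) : K.saturation →+ torsion (Γ ⧸ K) :=
  (QuotientAddGroup.mk' K).addSubgroupComap _

theorem toTorsionQuotient_surjective : Function.Surjective K.toTorsionQuotient :=
  AddMonoidHom.addSubgroupComap_surjective_of_surjective _ _ (QuotientAddGroup.mk'_surjective K)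

theorem toTorsionQuotient_eq_zero {x : K.saturation} :
    K.toTorsionQuotient x = 0 ↔ (x : Γ) ∈ K := by
  rw [← Subtype.coe_inj]
  exact QuotientAddGroup.eq_zero_iff _

def torsionQuotientMap (h : K ≤ K') : torsion (Γ ⧸ K) →+ torsion (Γ ⧸ K') :=
  let f := QuotientAddGroup.map K K' (.id Γ) h
  (f.addSubgroupComap (torsion _)).comp (inclusion (le_comap_torsion f))

theorem torsionQuotientMap_toTorsionQuotient (h : K ≤ K') (x : K.saturation) :
    torsionQuotientMap h (K.toTorsionQuotient x) =
      K'.toTorsionQuotient ⟨x, saturation_mono h x.2⟩ := rfl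

theorem torsionQuotientMap_injective (h : K ≤ K') (h' : K' ⊓ K.saturation ≤ K) :
    Function.Injective (torsionQuotientMap h) := by
  rw [injective_iff_map_eq_zero]
  intro t ht
  obtain ⟨x, rfl⟩ := toTorsionQuotient_surjective t
  rw [torsionQuotientMap_toTorsionQuotient, toTorsionQuotient_eq_zero] at ht
  exact toTorsionQuotient_eq_zero.mpr (h' ⟨ht, x.2⟩)

theorem toTorsionQuotient_mem_range_torsionQuotientMap (h : K ≤ K') (x : K'.saturation) :
    K'.toTorsionQuotient x ∈ (torsionQuotientMap h).range ↔ (x : Γ) ∈ K.saturation ⊔ K' := by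
  constructor
  · rintro ⟨t, ht⟩
    obtain ⟨y, rfl⟩ := toTorsionQuotient_surjective t
    rw [torsionQuotientMap_toTorsionQuotient, ← sub_eq_zero, ← map_sub,
      toTorsionQuotient_eq_zero] at ht
    have := sub_mem (mem_sup_left (T := K') y.2) (mem_sup_right ht)
    rwa [coe_sub, sub_sub_cancel] at this
  · intro hx
    obtain ⟨y, hy, z, hz, hyz⟩ := mem_sup.mp hx
    refine ⟨K.toTorsionQuotient ⟨y, hy⟩, ?_⟩
    rw [torsionQuotientMap_toTorsionQuotient, ← sub_eq_zero, ← map_sub,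
      toTorsionQuotient_eq_zero]
    simpa [← hyz] using neg_mem hz

noncomputable def quotientRangeTorsionQuotientMapEquiv (h : K ≤ K') :
    torsion (Γ ⧸ K') ⧸ (torsionQuotientMap h).range ≃+
      K'.saturation ⧸ (K.saturation ⊔ K').addSubgroupOf K'.saturation := by
  let ψ := (QuotientAddGroup.mk' (torsionQuotientMap h).range).comp K'.toTorsionQuotient
  have hψ : Function.Surjective ψ :=
    (QuotientAddGroup.mk'_surjective _).comp toTorsionQuotient_surjective
  have hker : ψ.ker = (K.saturation ⊔ K').addSubgroupOf K'.saturation := by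
    ext x
    rw [AddMonoidHom.mem_ker, AddMonoidHom.comp_apply, QuotientAddGroup.mk'_apply,
      QuotientAddGroup.eq_zero_iff, toTorsionQuotient_mem_range_torsionQuotientMap,
      mem_addSubgroupOf]
  exact (QuotientAddGroup.quotientKerEquivOfSurjective ψ hψ).symm.trans
    (QuotientAddGroup.quotientAddEquivOfEq hker)

variable {G : Type*} [AddCommGroup G] [DivisibleBy G ℤ]

theorem card_addMonoidHom_torsion_eq_mul (h : K ≤ K') (h' : K' ⊓ K.saturation ≤ K) :
    Nat.card (torsion (Γ ⧸ K') →+ G) = Nat.card (torsion (Γ ⧸ K) →+ G) *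
      Nat.card (K'.saturation ⧸ (K.saturation ⊔ K').addSubgroupOf K'.saturation →+ G) := by
  rw [card_addMonoidHom_eq_mul_of_injective (torsionQuotientMap_injective h h'),
    Nat.card_congr (quotientRangeTorsionQuotientMapEquiv h).addMonoidHomCongrLeftEquiv]

theorem card_addMonoidHom_torsion_mul_card_addMonoidHom_torsion {K₁ K₂ K₃ : AddSubgroup Γ}
    (h₁₂ : K₁ ≤ K₂) (h₁₃ : K₁ ≤ K₃) (h₃ : K₃ ≤ K₁.saturation) (h₂ : K₂ ⊓ K₁.saturation ≤ K₁) :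
    Nat.card (torsion (Γ ⧸ K₁) →+ G) * Nat.card (torsion (Γ ⧸ K₂ ⊔ K₃) →+ G) =
      Nat.card (torsion (Γ ⧸ K₂) →+ G) * Nat.card (torsion (Γ ⧸ K₃) →+ G) := by
  have hsat₃ : K₃.saturation = K₁.saturation :=
    le_antisymm (saturation_le_saturation_of_le_saturation h₃) (saturation_mono h₁₃)
  have hsat₄ : (K₂ ⊔ K₃).saturation = K₂.saturation :=
    le_antisymm (saturation_le_saturation_of_le_saturation
      (sup_le le_saturation (h₃.trans (saturation_mono h₁₂)))) (saturation_mono le_sup_left)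
  have h₄ : (K₂ ⊔ K₃) ⊓ K₃.saturation ≤ K₃ := by
    rw [hsat₃, sup_comm, sup_inf_assoc_of_le _ h₃]
    exact sup_le le_rfl (h₂.trans h₁₃)
  have hsup : K₃.saturation ⊔ (K₂ ⊔ K₃) = K₁.saturation ⊔ K₂ := by
    rw [hsat₃, ← sup_assoc, sup_right_comm, sup_eq_left.mpr h₃]
  rw [card_addMonoidHom_torsion_eq_mul h₁₂ h₂, card_addMonoidHom_torsion_eq_mul le_sup_right h₄,
    hsat₄, Nat.card_congr (QuotientAddGroup.quotientAddEquivOfEq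
      (congrArg (addSubgroupOf · K₂.saturation) hsup)).addMonoidHomCongrLeftEquiv]
  ring

end TorsionQuotient

section Rank

instance [AddGroup.FG Γ] (M : AddSubgroup Γ) : Module.Finite ℤ M :=
  inferInstanceAs (Module.Finite ℤ M.toIntSubmodule)

theorem finrank_closure_eq_finrank_span (S : Set Γ) :
    finrank ℤ (closure S) = finrank ℤ (Submodule.span ℤ S) := by
  rw [← Submodule.span_int_eq_addSubgroupClosure]
  rfl

variable [AddGroup.FG Γ]

theorem finrank_map_mk'_add_finrank (h : K ≤ K') :
    finrank ℤ (K'.map (QuotientAddGroup.mk' K)) + finrank ℤ K = finrank ℤ K' := by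
  have := ((QuotientAddGroup.mk' K).comp K'.subtype).finrank_range_add_finrank_ker
  rwa [AddMonoidHom.range_comp, range_subtype, ← AddMonoidHom.comap_ker,
    QuotientAddGroup.ker_mk', ← addSubgroupOf,
    (addSubgroupOfEquivOfLe h).toIntLinearEquiv.finrank_eq] at this

theorem le_saturation_of_finrank_eq (h : K ≤ K') (hr : finrank ℤ K' = finrank ℤ K) :
    K' ≤ K.saturation := by
  have h0 : finrank ℤ (K'.map (QuotientAddGroup.mk' K)) = 0 := by
    have := finrank_map_mk'_add_finrank h
    omega
  intro x hx
  obtain ⟨n, hn, hnx⟩ := Module.finrank_eq_zero_iff.mp h0 ⟨_, mem_map_of_mem _ hx⟩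
  exact isOfFinAddOrder_iff_zsmul_eq_zero.mpr ⟨n, hn, congrArg Subtype.val hnx⟩

theorem sup_closure_inf_saturation_le {ι : Type*} [Fintype ι] (v : ι → Γ)
    (hr : finrank ℤ ↥(K ⊔ closure (Set.range v)) = finrank ℤ K + Fintype.card ι) :
    (K ⊔ closure (Set.range v)) ⊓ K.saturation ≤ K := by
  have hrank := finrank_map_mk'_add_finrank (le_sup_left (a := K) (b := closure (Set.range v)))
  set q := QuotientAddGroup.mk' K
  have hmap : (K ⊔ closure (Set.range v)).map q = closure (Set.range (q ∘ v)) := by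
    rw [map_sup, QuotientAddGroup.map_mk'_self, bot_sup_eq, AddMonoidHom.map_closure,
      Set.range_comp]
  have hli : LinearIndependent ℤ (q ∘ v) := by
    rw [linearIndependent_iff_card_eq_finrank_span, Set.finrank,
      ← finrank_closure_eq_finrank_span, ← hmap]
    omega
  rintro x ⟨hxM, hxK⟩
  obtain ⟨c, hc⟩ : ∃ c : ι → ℤ, ∑ i, c i • q (v i) = q x := by
    rw [← Submodule.mem_span_range_iff_exists_fun, ← Submodule.mem_toAddSubgroup,
      Submodule.span_int_eq_addSubgroupClosure, ← Function.comp_def, ← hmap]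
    exact mem_map_of_mem q hxM
  obtain ⟨n, hn, hnx⟩ := isOfFinAddOrder_iff_nsmul_eq_zero.mp hxK
  have hnc := Fintype.linearIndependent_iff.mp hli (fun i => n * c i) (by
    simp only [Function.comp_apply, mul_smul, ← Finset.smul_sum, hc, natCast_zsmul]
    exact hnx)
  have hc0 : c = 0 := funext fun i => by simpa [hn.ne'] using hnc i
  rw [← QuotientAddGroup.eq_zero_iff, ← QuotientAddGroup.mk'_apply, ← hc, hc0]
  simp

end Rank

end AddSubgroup

theorem axiom3_divisible_general {ι Γ : Type*} [DecidableEq ι] [AddCommGroup Γ] [AddGroup.FG Γ]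
    (G : Type*) [AddCommGroup G]
    (hdiv : ∀ k : ℕ, 0 < k → Function.Surjective (fun g : G => k • g))
    (a : ι → Γ) (S B C : Finset ι)
    (hSB : Disjoint S B) (hBC : Disjoint B C)
    (hr : ∀ R : Finset ι, S ⊆ R → R ⊆ S ∪ B ∪ C →
      rk Γ (a '' (R : Set ι)) = rk Γ (a '' (S : Set ι)) + (R ∩ B).card) :
    mult Γ G (a '' (S : Set ι)) * mult Γ G (a '' ((S ∪ B ∪ C : Finset ι) : Set ι)) =
      mult Γ G (a '' ((S ∪ B : Finset ι) : Set ι)) *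
        mult Γ G (a '' ((S ∪ C : Finset ι) : Set ι)) := by
  let _ : DivisibleBy G ℕ := divisibleByOfSMulRightSurj G ℕ fun hk => hdiv _ (Nat.pos_of_ne_zero hk)
  let _ : DivisibleBy G ℤ := AddGroup.divisibleByIntOfDivisibleByNat G
  let K : Finset ι → AddSubgroup Γ := fun R => AddSubgroup.closure (a '' R)
  have hK_union (R R' : Finset ι) : K (R ∪ R') = K R ⊔ K R' := by
    simp only [K, Finset.coe_union, Set.image_union, AddSubgroup.closure_union]
  have hK_mono {R R' : Finset ι} (h : R ⊆ R') : K R ≤ K R' :=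
    AddSubgroup.closure_mono (Set.image_mono (Finset.coe_subset.mpr h))
  have hrank : ∀ R, S ⊆ R → R ⊆ S ∪ B ∪ C → finrank ℤ (K R) = finrank ℤ (K S) + (R ∩ B).card :=
    hr
  have hC : K (S ∪ C) ≤ (K S).saturation := by
    refine AddSubgroup.le_saturation_of_finrank_eq (hK_mono Finset.subset_union_left) ?_
    have := hrank (S ∪ C) Finset.subset_union_left
      (Finset.union_subset_union Finset.subset_union_left subset_rfl)
    rwa [Finset.disjoint_iff_inter_eq_empty.mp (Finset.disjoint_union_left.mpr ⟨hSB, hBC.symm⟩),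
      Finset.card_empty, add_zero] at this
  have hB : K (S ∪ B) ⊓ (K S).saturation ≤ K S := by
    have := hrank (S ∪ B) Finset.subset_union_left Finset.subset_union_left
    rw [Finset.union_inter_cancel_right] at this
    have hKB : K B = AddSubgroup.closure (Set.range fun b : (B : Set ι) => a b) :=
      congrArg AddSubgroup.closure (Set.image_eq_range a B)
    rw [hK_union, hKB] at this ⊢
    exact AddSubgroup.sup_closure_inf_saturation_le _ (by simpa using this)
  have := AddSubgroup.card_addMonoidHom_torsion_mul_card_addMonoidHom_torsion (G := G)
    (hK_mono Finset.subset_union_left) (hK_mono Finset.subset_union_left) hC hB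
  rwa [← hK_union, ← Finset.union_union_distrib_left, ← Finset.union_assoc] at this

/-- Axiom (3) for `G`-multiplicities when `G` is torsion-wise finite and divisible:
if `𝒯 = 𝒮 ⊔ ℬ ⊔ 𝒞` and `r_ℛ = r_𝒮 + #(ℛ ∩ ℬ)` for all `𝒮 ⊆ ℛ ⊆ 𝒯`, then
`m(𝒮;G)·m(𝒯;G) = m(𝒮⊔ℬ;G)·m(𝒮⊔𝒞;G)`. -/
theorem axiom3_divisible {ι Γ : Type*} [DecidableEq ι] [AddCommGroup Γ] [AddGroup.FG Γ]
    (G : Type*) [AddCommGroup G] (hG : TorsionwiseFinite G)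
    (hdiv : ∀ k : ℕ, 0 < k → Function.Surjective (fun g : G => k • g))
    (a : ι → Γ) (S B C : Finset ι)
    (hSB : Disjoint S B) (hSC : Disjoint S C) (hBC : Disjoint B C)
    (hr : ∀ R : Finset ι, S ⊆ R → R ⊆ S ∪ B ∪ C →
      rk Γ (a '' (R : Set ι)) = rk Γ (a '' (S : Set ι)) + (R ∩ B).card) :
    mult Γ G (a '' (S : Set ι)) * mult Γ G (a '' ((S ∪ B ∪ C : Finset ι) : Set ι)) =
      mult Γ G (a '' ((S ∪ B : Finset ι) : Set ι)) *
        mult Γ G (a '' ((S ∪ C : Finset ι) : Set ι)) :=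
  axiom3_divisible_general G hdiv a S B C hSB hBC hr
end
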